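/- arXiv:2502.16382 — 2 statements merged into one kernel-verified Lean document; each statement's English description precedes it below -/
import Mathlib

section
/- For every edge e = {u,v} of a finite connected simple graph G, the Earth Mover's Distance between the uniform closed-neighborhood distributions satisfies EMD_{dist_G}(P_u, P_v) ≤ 3·‖e‖_TVD; consequently C_G(e) ≥ 1 − 3·‖e‖_TVD. (This is the lower-bound half of the paper's inequality (eqb1); it holds because any point of Nbr_G(u) and any point of Nbr_G(v) are at graph distance at most 3.) -/
/-!
Couple `μ` and `ν` maximally: the common mass `min μ ν` stays in place at cost `0`, and the
excess `μ - min μ ν`, whose total is the total variation distance, is spread proportionally over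
the deficit `ν - min μ ν`. Moved mass travels from the support of `μ` to that of `ν`, so each
unit costs at most any bound `K` on the distance between the supports. For `P_u`, `P_v` with `u ~ v`, the supports are
the closed neighbourhoods, which are within distance `1 + 1 + 1 = 3` of each other.
-/

/-- Earth Mover's Distance between two distributions `μ ν : V → ℝ` w.r.t. a
cost function `d : V → V → ℝ`: the minimum (infimum) of the total transport cost
over all feasible transport plans. -/
noncomputable def EMD {V : Type} (d : V → V → ℝ) (μ ν : V → ℝ) : ℝ :=
  sInf { c : ℝ | ∃ z : V → V → ℝ,
    (∀ u v, 0 ≤ z u v) ∧ (∀ u, ∑ᶠ v, z u v = μ u) ∧ (∀ v, ∑ᶠ u, z u v = ν v) ∧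
    c = ∑ᶠ u, ∑ᶠ v, d u v * z u v }

/-- The degree of a vertex: the number of its neighbours. -/
noncomputable def degC {V : Type} (G : SimpleGraph V) (u : V) : ℕ :=
  Nat.card {x | G.Adj u x}

open Classical in
/-- The uniform probability distribution on the closed neighbourhood of `u`. -/
noncomputable def Pdist {V : Type} (G : SimpleGraph V) (u : V) : V → ℝ :=
  fun w => if w = u ∨ G.Adj u w then ((degC G u : ℝ) + 1)⁻¹ else 0

/-- The graph distance, as a real-valued cost function. -/
noncomputable def gdist {V : Type} (G : SimpleGraph V) : V → V → ℝ :=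
  fun a b => (G.dist a b : ℝ)

/-- The total variation distance between the closed-neighbourhood distributions of `u`, `v`. -/
noncomputable def tvd {V : Type} (G : SimpleGraph V) (u v : V) : ℝ :=
  (1 / 2) * ∑ᶠ w, |Pdist G u w - Pdist G v w|

/-- The Ollivier–Ricci curvature of the (ordered) pair `u v`. -/
noncomputable def ricci {V : Type} (G : SimpleGraph V) (u v : V) : ℝ :=
  1 - EMD (gdist G) (Pdist G u) (Pdist G v)

open Finset

section Transport

variable {V : Type}

def excess (μ ν : V → ℝ) (w : V) : ℝ :=
  μ w - min (μ w) (ν w)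

theorem excess_nonneg (μ ν : V → ℝ) (w : V) : 0 ≤ excess μ ν w :=
  sub_nonneg.2 (min_le_left _ _)

theorem excess_eq_zero_of_eq_zero {μ ν : V → ℝ} {w : V} (hν : 0 ≤ ν w) (hμ : μ w = 0) :
    excess μ ν w = 0 := by
  simp [excess, hμ, hν]

theorem excess_add_excess (μ ν : V → ℝ) (w : V) :
    excess μ ν w + excess ν μ w = |μ w - ν w| := by
  rw [excess, excess, min_comm (ν w), ← max_sub_min_eq_abs']
  linarith [min_add_max (μ w) (ν w)]

variable [Fintype V]

theorem EMD_le_transportCost {d : V → V → ℝ} {μ ν : V → ℝ} (hd : ∀ a b, 0 ≤ d a b)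
    (z : V → V → ℝ) (hz : ∀ a b, 0 ≤ z a b) (hrow : ∀ a, ∑ b, z a b = μ a)
    (hcol : ∀ b, ∑ a, z a b = ν b) :
    EMD d μ ν ≤ ∑ a, ∑ b, d a b * z a b := by
  refine csInf_le ⟨0, ?_⟩ ⟨z, hz, ?_, ?_, ?_⟩
  · rintro c ⟨z', hz', -, -, rfl⟩
    simp only [finsum_eq_sum_of_fintype]
    exact sum_nonneg fun a _ => sum_nonneg fun b _ => mul_nonneg (hd a b) (hz' a b)
  all_goals simp only [finsum_eq_sum_of_fintype, hrow, hcol, implies_true]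

theorem sum_excess_comm {μ ν : V → ℝ} (hsum : ∑ w, μ w = ∑ w, ν w) :
    ∑ w, excess μ ν w = ∑ w, excess ν μ w := by
  simp only [excess, sum_sub_distrib, hsum, min_comm]

theorem sum_abs_sub_eq_two_mul_sum_excess {μ ν : V → ℝ} (hsum : ∑ w, μ w = ∑ w, ν w) :
    ∑ w, |μ w - ν w| = 2 * ∑ w, excess μ ν w := by
  simp only [← excess_add_excess, sum_add_distrib, ← sum_excess_comm hsum]
  ring

theorem mul_sum_div_sum_of_nonneg {f : V → ℝ} (hf : ∀ w, 0 ≤ f w) (a : V) :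
    f a * (∑ w, f w) / ∑ w, f w = f a := by
  by_cases h : ∑ w, f w = 0
  · simp [(sum_eq_zero_iff_of_nonneg fun w _ => hf w).1 h a (mem_univ a)]
  · exact mul_div_cancel_right₀ _ h

variable [DecidableEq V]

noncomputable def maximalCoupling (μ ν : V → ℝ) (a b : V) : ℝ :=
  (if a = b then min (μ a) (ν a) else 0) + excess μ ν a * excess ν μ b / ∑ w, excess μ ν w

theorem maximalCoupling_nonneg {μ ν : V → ℝ} (hμ : ∀ w, 0 ≤ μ w) (hν : ∀ w, 0 ≤ ν w) (a b : V) :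
    0 ≤ maximalCoupling μ ν a b := by
  have := le_min (hμ a) (hν a)
  have := excess_nonneg μ ν a
  have := excess_nonneg ν μ b
  have : 0 ≤ ∑ w, excess μ ν w := sum_nonneg fun w _ => excess_nonneg μ ν w
  unfold maximalCoupling
  split_ifs <;> positivity

theorem sum_maximalCoupling_right {μ ν : V → ℝ} (hsum : ∑ w, μ w = ∑ w, ν w) (a : V) :
    ∑ b, maximalCoupling μ ν a b = μ a := by
  simp only [maximalCoupling, sum_add_distrib, sum_ite_eq, mem_univ, if_true]
  rw [← sum_div, ← mul_sum, ← sum_excess_comm hsum,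
    mul_sum_div_sum_of_nonneg (excess_nonneg μ ν), excess]
  ring

theorem sum_maximalCoupling_left {μ ν : V → ℝ} (hsum : ∑ w, μ w = ∑ w, ν w) (b : V) :
    ∑ a, maximalCoupling μ ν a b = ν b := by
  simp only [maximalCoupling, sum_add_distrib, sum_ite_eq', mem_univ, if_true]
  rw [← sum_div, ← sum_mul, sum_excess_comm hsum, mul_comm (∑ w, excess ν μ w),
    mul_sum_div_sum_of_nonneg (excess_nonneg ν μ), excess, min_comm]
  ring

theorem EMD_le_mul_half_sum_abs_sub {d : V → V → ℝ} {μ ν : V → ℝ} {K : ℝ}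
    (hd : ∀ a b, 0 ≤ d a b) (hd_self : ∀ a, d a a = 0)
    (hdK : ∀ a b, μ a ≠ 0 → ν b ≠ 0 → d a b ≤ K)
    (hμ : ∀ w, 0 ≤ μ w) (hν : ∀ w, 0 ≤ ν w) (hsum : ∑ w, μ w = ∑ w, ν w) :
    EMD d μ ν ≤ K * ((1 / 2) * ∑ w, |μ w - ν w|) := by
  set T := ∑ w, excess μ ν w
  have hterm (a b : V) :
      d a b * maximalCoupling μ ν a b ≤ K * (excess μ ν a * excess ν μ b / T) := by
    have hstay : d a b * (if a = b then min (μ a) (ν a) else 0) = 0 := by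
      split_ifs with h <;> simp [h, hd_self]
    rw [maximalCoupling, mul_add, hstay, zero_add]
    rcases eq_or_ne (excess μ ν a * excess ν μ b) 0 with h | h
    · simp [h]
    obtain ⟨ha, hb⟩ := mul_ne_zero_iff.1 h
    have := excess_nonneg μ ν a
    have := excess_nonneg ν μ b
    have : 0 ≤ T := sum_nonneg fun w _ => excess_nonneg μ ν w
    refine mul_le_mul_of_nonneg_right (hdK a b ?_ ?_) (by positivity)
    · exact mt (excess_eq_zero_of_eq_zero (hν a)) ha
    · exact mt (excess_eq_zero_of_eq_zero (hμ b)) hb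
  calc EMD d μ ν ≤ ∑ a, ∑ b, d a b * maximalCoupling μ ν a b :=
        EMD_le_transportCost hd _ (maximalCoupling_nonneg hμ hν)
          (sum_maximalCoupling_right hsum) (sum_maximalCoupling_left hsum)
    _ ≤ ∑ a, ∑ b, K * (excess μ ν a * excess ν μ b / T) :=
        sum_le_sum fun a _ => sum_le_sum fun b _ => hterm a b
    _ = K * (T * T / T) := by
        simp only [← mul_sum, ← sum_div, ← sum_mul, ← sum_excess_comm hsum, T]
    _ = K * ((1 / 2) * ∑ w, |μ w - ν w|) := by
        rw [mul_self_div_self, sum_abs_sub_eq_two_mul_sum_excess hsum]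
        ring

end Transport

section Graph

variable {V : Type} (G : SimpleGraph V)

theorem Pdist_nonneg (u w : V) : 0 ≤ Pdist G u w := by
  unfold Pdist
  split_ifs <;> positivity

theorem card_closedNeighborhood [Fintype V] (u : V) [DecidablePred fun w => w = u ∨ G.Adj u w] :
    #{w | w = u ∨ G.Adj u w} = degC G u + 1 := by
  classical
  have : ({w | w = u ∨ G.Adj u w} : Finset V) = insert u (G.neighborFinset u) := by
    ext w; simp
  rw [this, card_insert_of_notMem (by simp), G.card_neighborFinset_eq_degree, degC,
    Nat.card_eq_fintype_card, ← G.card_neighborSet_eq_degree]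
  rfl

theorem sum_Pdist [Fintype V] (u : V) : ∑ w, Pdist G u w = 1 := by
  classical
  simp only [Pdist, sum_ite, sum_const_zero, add_zero, sum_const, nsmul_eq_mul,
    card_closedNeighborhood]
  push_cast
  field_simp

theorem dist_le_one_of_Pdist_ne_zero {u w : V} (h : Pdist G u w ≠ 0) : G.dist u w ≤ 1 := by
  unfold Pdist at h
  split_ifs at h with hw
  · rcases hw with rfl | hadj
    · simp
    · exact (SimpleGraph.dist_eq_one_iff_adj.2 hadj).le
  · exact absurd rfl h

theorem gdist_le_three_of_adj (hG : G.Connected) {u v a b : V} (huv : G.Adj u v)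
    (ha : Pdist G u a ≠ 0) (hb : Pdist G v b ≠ 0) : gdist G a b ≤ 3 := by
  have hua := dist_le_one_of_Pdist_ne_zero G ha
  have hvb := dist_le_one_of_Pdist_ne_zero G hb
  have := SimpleGraph.dist_eq_one_iff_adj.2 huv
  have := hG.dist_triangle (u := a) (v := u) (w := b)
  have := hG.dist_triangle (u := u) (v := v) (w := b)
  rw [SimpleGraph.dist_comm] at hua
  unfold gdist
  exact_mod_cast (by omega : G.dist a b ≤ 3)

end Graph

/-- For every edge `e = {u,v}` of a finite connected simple graph `G`,
the Earth Mover's Distance between the uniform closed-neighborhood distributions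
satisfies `EMD_{dist_G}(P_u, P_v) ≤ 3·‖e‖_TVD`; consequently
`C_G(e) ≥ 1 − 3·‖e‖_TVD`. -/
theorem emd_le_three_tvd {V : Type} [Finite V] (G : SimpleGraph V) (hG : G.Connected)
    (u v : V) (huv : G.Adj u v) :
    EMD (gdist G) (Pdist G u) (Pdist G v) ≤ 3 * tvd G u v ∧
    1 - 3 * tvd G u v ≤ ricci G u v := by
  have : Fintype V := Fintype.ofFinite V
  classical
  have hEMD : EMD (gdist G) (Pdist G u) (Pdist G v) ≤ 3 * tvd G u v := by
    rw [tvd, finsum_eq_sum_of_fintype]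
    refine EMD_le_mul_half_sum_abs_sub (fun a b => Nat.cast_nonneg _) (fun a => by simp [gdist])
      (fun a b => gdist_le_three_of_adj G hG huv) (Pdist_nonneg G u) (Pdist_nonneg G v) ?_
    rw [sum_Pdist, sum_Pdist]
  exact ⟨hEMD, by rw [ricci]; linarith⟩
end

section
/- In the graph G_{q,k} with q ≥ 1 and k ≥ 2, every tree edge of H_2 joining two non-leaf (internal) vertices r_i and r_j satisfies EMD_{dist}(P_{r_i}, P_{r_j}) = 5/2, i.e., C_{G_{q,k}}({r_i,r_j}) = −3/2 (both endpoints have degree 11 and all cross-neighborhood distances equal 3); in particular C_{G_{q,k}}({r_i,r_j}) ≤ −1/4 for each such edge, and the sum Λ₄ of the curvatures over all internal tree edges satisfies Λ₄ ≤ (−(q + N_k + 2) + q + 3)/10, i.e., Λ₄ ≤ (−N_k + 1)/10. (This establishes the bound Λ₄ ≤ (−n + √n + 3)/10 asserted in claim (v) of the proof of the paper's Theorem 1, with n = q + N_k + 2.) -/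
/-- Vertices of the complete 10-ary tree of depth `k`: lists over `Fin 10` of length
at most `k`, recording the (reversed) path from the root `[]`. -/
def TreeVert (k : ℕ) : Type := { l : List (Fin 10) // l.length ≤ k }

instance (k : ℕ) : DecidableEq (TreeVert k) :=
  inferInstanceAs (DecidableEq { l : List (Fin 10) // l.length ≤ k })

instance (k : ℕ) : Fintype (TreeVert k) :=
  Fintype.ofSurjective
    (fun x : Σ j : Fin (k + 1), List.Vector (Fin 10) j =>
      (⟨x.2.1, by have h1 := x.2.2; have h2 := x.1.isLt; omega⟩ : TreeVert k))
    (fun y => ⟨⟨⟨y.1.length, Nat.lt_succ_of_le y.2⟩, ⟨y.1, rfl⟩⟩, Subtype.ext rfl⟩)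

/-- The root of the tree. -/
def treeRoot (k : ℕ) : TreeVert k := ⟨[], by simp⟩

/-- The parent of a tree vertex (the root is mapped to itself). -/
def treeParent {k : ℕ} (x : TreeVert k) : TreeVert k :=
  ⟨x.1.tail, by have h1 := x.2; have h2 : x.1.tail.length = x.1.length - 1 := List.length_tail; omega⟩

/-- The vertex set of the graph `G_{q,k}`: the two special vertices `s`, `t`
(encoded as `Fin 2`), the vertices `p_1, …, p_q`, and the tree vertices. -/
abbrev GVert (q k : ℕ) : Type := (Fin 2 ⊕ Fin q) ⊕ TreeVert k

def vS (q k : ℕ) : GVert q k := Sum.inl (Sum.inl 0)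
def vT (q k : ℕ) : GVert q k := Sum.inl (Sum.inl 1)
def vP (q k : ℕ) (i : Fin q) : GVert q k := Sum.inl (Sum.inr i)
def vTr (q k : ℕ) (x : TreeVert k) : GVert q k := Sum.inr x

/-- Base adjacency relation generating the edges of `G_{q,k}`: the edge `{s,t}`,
the edges `{p_i, s}` and `{p_i, t}`, the bridge `{t, r_1}` to the root of the tree,
and the parent-child tree edges. -/
def gadjBase (q k : ℕ) : GVert q k → GVert q k → Prop := fun x y =>
  (x = vS q k ∧ y = vT q k) ∨
  (∃ i : Fin q, x = vP q k i ∧ (y = vS q k ∨ y = vT q k)) ∨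
  (x = vT q k ∧ y = vTr q k (treeRoot k)) ∨
  (∃ u v : TreeVert k, x = vTr q k u ∧ y = vTr q k v ∧ ∃ a : Fin 10, u.1 = a :: v.1)

/-- The graph `G_{q,k}` from the proof of the paper's Theorem 1
(with `q` playing the role of `√n`). -/
def Gqk (q k : ℕ) : SimpleGraph (GVert q k) := SimpleGraph.fromRel (gadjBase q k)

/-- `N_k = (10^(k+1) - 1)/9`, the number of vertices of the complete 10-ary tree of depth `k`. -/
def Nk (k : ℕ) : ℕ := (10 ^ (k + 1) - 1) / 9

/-!
Let `y` be the parent of the internal vertex `x`. Both have ten children and one further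
neighbour (the parent of `y`, or `t` if `y` is the root), so `P_x` and `P_y` are uniform of mass
`1/12` on closed neighbourhoods of twelve vertices. Sending `x ↦ y`, `y ↦` the neighbour above `y`,
and the `a`-th child of `x` to the `a`-th child of `y` costs `1 + 1 + 1 + 9 · 3 = 30` twelfths:
the child of `y` with the index of `x` is `x` itself, every other pair is joined through `x`, `y`.
Conversely, the potential that is `0` strictly below `x`, `1` at `x`, `2` at `y` and `3` elsewhere
is `1`-Lipschitz and its means under `P_y` and `P_x` differ by `(33 - 3)/12`, so by weak duality
`EMD(P_x, P_y) = 5/2`. There are at least `10^(k-1)` such edges, which bounds their total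
curvature.
-/

open Function

section Transport

variable {V : Type}

def IsTransportPlan (μ ν : V → ℝ) (z : V → V → ℝ) : Prop :=
  (∀ u v, 0 ≤ z u v) ∧ (∀ u, ∑ᶠ v, z u v = μ u) ∧ (∀ v, ∑ᶠ u, z u v = ν v)

lemma EMD_le_cost {d : V → V → ℝ} (hd : ∀ u v, 0 ≤ d u v) {μ ν : V → ℝ} {z : V → V → ℝ}
    (hz : IsTransportPlan μ ν z) : EMD d μ ν ≤ ∑ᶠ u, ∑ᶠ v, d u v * z u v := by
  refine csInf_le ⟨0, ?_⟩ ⟨z, hz.1, hz.2.1, hz.2.2, rfl⟩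
  rintro c ⟨w, hw, -, -, rfl⟩
  exact finsum_nonneg fun u => finsum_nonneg fun v => mul_nonneg (hd u v) (hw u v)

variable {ι : Type} [Fintype ι] {e e' : ι → V}

lemma sum_ite_eq_indicator_range [DecidableEq V] (he : Injective e) (c : ℝ) (u : V) :
    ∑ i, (if e i = u then c else 0) = (Set.range e).indicator (fun _ => c) u := by
  by_cases hu : u ∈ Set.range e
  · obtain ⟨j, rfl⟩ := hu
    rw [Fintype.sum_eq_single j fun i hi => if_neg (he.ne hi), if_pos rfl,
      Set.indicator_of_mem (Set.mem_range_self j)]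
  · rw [Set.indicator_of_notMem hu]
    exact Finset.sum_eq_zero fun i _ => if_neg fun h => hu ⟨i, h⟩

def indexCoupling [DecidableEq V] (e e' : ι → V) (c : ℝ) (u v : V) : ℝ :=
  ∑ i, if e i = u ∧ e' i = v then c else 0

variable [Fintype V]

lemma le_EMD_of_potential {d : V → V → ℝ} {f : V → ℝ} (hf : ∀ u v, f v - f u ≤ d u v)
    {μ ν : V → ℝ} {z : V → V → ℝ} (hz : IsTransportPlan μ ν z) :
    ∑ v, f v * ν v - ∑ u, f u * μ u ≤ EMD d μ ν := by
  refine le_csInf ⟨_, z, hz.1, hz.2.1, hz.2.2, rfl⟩ ?_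
  rintro c ⟨w, hw, hrow, hcol, rfl⟩
  simp only [finsum_eq_sum_of_fintype] at hrow hcol ⊢
  calc ∑ v, f v * ν v - ∑ u, f u * μ u
      = ∑ u, ∑ v, (f v - f u) * w u v := by
        simp only [← hrow, ← hcol, Finset.mul_sum, sub_mul, Finset.sum_sub_distrib]
        rw [Finset.sum_comm]
    _ ≤ ∑ u, ∑ v, d u v * w u v := by
        gcongr with u _ v _
        · exact hw u v
        · exact hf u v

lemma sum_mul_indicator_range (he : Injective e) (f : V → ℝ) (c : ℝ) :
    ∑ w, f w * (Set.range e).indicator (fun _ => c) w = c * ∑ i, f (e i) := by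
  rw [Finset.mul_sum]
  refine (Fintype.sum_of_injective e he _ _ (fun w hw => ?_) fun i => ?_).symm
  · simp [Set.indicator_of_notMem hw]
  · simp [mul_comm]

lemma isTransportPlan_indexCoupling [DecidableEq V] (he : Injective e) (he' : Injective e')
    {c : ℝ} (hc : 0 ≤ c) :
    IsTransportPlan ((Set.range e).indicator fun _ => c) ((Set.range e').indicator fun _ => c)
      (indexCoupling e e' c) := by
  refine ⟨fun u v => Finset.sum_nonneg fun i _ => by split_ifs <;> simp [hc], fun u => ?_,
    fun v => ?_⟩
  · simp only [finsum_eq_sum_of_fintype, indexCoupling]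
    rw [Finset.sum_comm, ← sum_ite_eq_indicator_range he]
    simp [ite_and]
  · simp only [finsum_eq_sum_of_fintype, indexCoupling]
    rw [Finset.sum_comm, ← sum_ite_eq_indicator_range he']
    simp [ite_and]

lemma cost_indexCoupling [DecidableEq V] (d : V → V → ℝ) (c : ℝ) :
    ∑ᶠ u, ∑ᶠ v, d u v * indexCoupling e e' c u v = c * ∑ i, d (e i) (e' i) := by
  simp only [finsum_eq_sum_of_fintype, indexCoupling, Finset.mul_sum]
  calc ∑ u, ∑ v, ∑ i, d u v * (if e i = u ∧ e' i = v then c else 0)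
      = ∑ u, ∑ i, ∑ v, d u v * (if e i = u ∧ e' i = v then c else 0) :=
        Finset.sum_congr rfl fun u _ => Finset.sum_comm
    _ = ∑ i, c * d (e i) (e' i) := by
        rw [Finset.sum_comm]
        simp [ite_and, mul_comm]

lemma EMD_indicator_range_le {d : V → V → ℝ} (hd : ∀ u v, 0 ≤ d u v) (he : Injective e)
    (he' : Injective e') {c : ℝ} (hc : 0 ≤ c) :
    EMD d ((Set.range e).indicator fun _ => c) ((Set.range e').indicator fun _ => c) ≤
      c * ∑ i, d (e i) (e' i) := by
  classical
  exact (EMD_le_cost hd (isTransportPlan_indexCoupling he he' hc)).trans_eq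
    (cost_indexCoupling d c)

lemma le_EMD_indicator_range {d : V → V → ℝ} {f : V → ℝ} (hf : ∀ u v, f v - f u ≤ d u v)
    (he : Injective e) (he' : Injective e') {c : ℝ} (hc : 0 ≤ c) :
    c * (∑ i, f (e' i) - ∑ i, f (e i)) ≤
      EMD d ((Set.range e).indicator fun _ => c) ((Set.range e').indicator fun _ => c) := by
  classical
  have := le_EMD_of_potential hf (isTransportPlan_indexCoupling he he' hc)
  rwa [sum_mul_indicator_range he', sum_mul_indicator_range he, ← mul_sub] at this

end Transport

section Graph

variable {V : Type} {G : SimpleGraph V}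

lemma SimpleGraph.Reachable.sub_le_dist {f : V → ℝ} (hf : ∀ a b, G.Adj a b → f b - f a ≤ 1)
    {u v : V} (h : G.Reachable u v) : f v - f u ≤ G.dist u v := by
  obtain ⟨p, hp⟩ := h.exists_walk_length_eq_dist
  rw [← hp]
  clear hp h
  induction p with
  | nil => simp
  | cons hab p ih =>
    rw [SimpleGraph.Walk.length_cons]
    push_cast
    linarith [hf _ _ hab]

variable {ι : Type} [Fintype ι] {e : ι → V} {u : V}

lemma degC_add_one_eq_card (he : Injective e)
    (hrange : Set.range e = insert u (G.neighborSet u)) : degC G u + 1 = Fintype.card ι := by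
  have hfin : (G.neighborSet u).Finite :=
    (Set.finite_range e).subset (hrange ▸ Set.subset_insert _ _)
  rw [← Nat.card_eq_fintype_card, ← Nat.card_range_of_injective he, hrange, Nat.card_coe_set_eq,
    Set.ncard_insert_of_notMem G.notMem_neighborSet_self hfin, degC, ← Nat.card_coe_set_eq]
  rfl

lemma Pdist_eq_indicator_range (he : Injective e)
    (hrange : Set.range e = insert u (G.neighborSet u)) :
    Pdist G u = (Set.range e).indicator fun _ => (Fintype.card ι : ℝ)⁻¹ := by
  classical
  ext w
  rw [Pdist, Set.indicator_apply, ← degC_add_one_eq_card he hrange]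
  simp [hrange, eq_comm]

end Graph

lemma List.isSuffix_and_length_lt_cons_iff {α : Type*} {L l : List α} (c : α) :
    (L <:+ c :: l ∧ L.length < (c :: l).length) ↔ L <:+ l := by
  constructor
  · rintro ⟨h, hlen⟩
    rcases List.suffix_cons_iff.mp h with rfl | h
    · simp at hlen
    · exact h
  · intro h
    exact ⟨h.trans (List.suffix_cons c l), by simpa using Nat.lt_succ_of_le h.length_le⟩

variable {q k : ℕ}

lemma vTr_inj {u v : TreeVert k} : vTr q k u = vTr q k v ↔ u = v := Sum.inr_injective.eq_iff

lemma vTr_ne_of_length_ne {u v : TreeVert k} (h : u.1.length ≠ v.1.length) :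
    vTr q k u ≠ vTr q k v := by
  rintro ⟨⟩
  exact h rfl

lemma vTr_ne_vT (u : TreeVert k) : vTr q k u ≠ vT q k := nofun

lemma treeParent_length_lt {x : TreeVert k} (hxk : x.1.length < k) :
    (treeParent x).1.length < k := by
  simp only [treeParent, List.length_tail]
  omega

lemma exists_cons_eq_iff_eq_treeParent {v u : TreeVert k} :
    (∃ a, v.1 = a :: u.1) ↔ v.1 ≠ [] ∧ u = treeParent v := by
  constructor
  · rintro ⟨a, h⟩
    exact ⟨by simp [h], Subtype.ext (by simp [treeParent, h])⟩
  · rintro ⟨h, rfl⟩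
    exact ⟨v.1.head h, (List.cons_head_tail h).symm⟩

def treeChild (v : TreeVert k) (hv : v.1.length < k) (a : Fin 10) : TreeVert k := ⟨a :: v.1, hv⟩

lemma eq_treeChild_iff {u v : TreeVert k} (hv : v.1.length < k) (a : Fin 10) :
    u = treeChild v hv a ↔ u.1 = a :: v.1 := Subtype.ext_iff

def upVert (v : TreeVert k) : GVert q k := if v.1 = [] then vT q k else vTr q k (treeParent v)

lemma upVert_eq_vTr_treeParent {x : TreeVert k} (hx : x.1 ≠ []) :
    upVert x = vTr q k (treeParent x) := if_neg hx

lemma vTr_ne_upVert (v : TreeVert k) : vTr q k v ≠ upVert v := by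
  unfold upVert
  split_ifs with h
  · exact vTr_ne_vT v
  · apply vTr_ne_of_length_ne
    have := List.length_pos_iff.mpr h
    simp only [treeParent, List.length_tail]
    omega

lemma upVert_ne_vTr_treeChild {v : TreeVert k} (hv : v.1.length < k) (a : Fin 10) :
    upVert v ≠ vTr q k (treeChild v hv a) := by
  unfold upVert
  split_ifs with h
  · exact (vTr_ne_vT _).symm
  · apply vTr_ne_of_length_ne
    simp only [treeParent, treeChild, List.length_tail, List.length_cons]
    omega

lemma Gqk_adj_vTr_vTr {u v : TreeVert k} :
    (Gqk q k).Adj (vTr q k u) (vTr q k v) ↔ (∃ a, u.1 = a :: v.1) ∨ ∃ a, v.1 = a :: u.1 := by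
  simp only [Gqk, gadjBase, vTr, vS, vT, vP, SimpleGraph.fromRel_adj]
  simp only [reduceCtorEq, false_and, Sum.inr.injEq, exists_and_left, exists_eq_left', false_or,
    exists_false, and_iff_right_iff_imp]
  rintro (⟨a, h⟩ | ⟨a, h⟩) huv <;> cases huv <;> simp at h

lemma Gqk_adj_vTr_inl {u : TreeVert k} {z : Fin 2 ⊕ Fin q} :
    (Gqk q k).Adj (vTr q k u) (Sum.inl z) ↔ u = treeRoot k ∧ z = Sum.inl 1 := by
  simp [Gqk, gadjBase, vTr, vS, vT, vP, SimpleGraph.fromRel_adj, and_comm]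

lemma Gqk_adj_vTr_iff {v : TreeVert k} (hv : v.1.length < k) {w : GVert q k} :
    (Gqk q k).Adj (vTr q k v) w ↔ w = upVert v ∨ ∃ a, w = vTr q k (treeChild v hv a) := by
  rcases w with z | u
  · rw [Gqk_adj_vTr_inl]
    unfold upVert
    split_ifs with h
    · simp [(Subtype.ext h : v = treeRoot k), vT, vTr]
    · have : v ≠ treeRoot k := fun hr => h (congrArg Subtype.val hr)
      simp [this, vTr]
  · rw [show (Sum.inr u : GVert q k) = vTr q k u from rfl, Gqk_adj_vTr_vTr,
      exists_cons_eq_iff_eq_treeParent]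
    unfold upVert
    split_ifs with h
    · simp [h, vT, vTr, eq_treeChild_iff]
    · simp only [vTr_inj, eq_treeChild_iff]
      simp [h]

lemma Gqk_reachable_vTr_vT : ∀ (l : List (Fin 10)) (hl : l.length ≤ k),
    (Gqk q k).Reachable (vTr q k ⟨l, hl⟩) (vT q k)
  | [], _ => (Gqk_adj_vTr_inl.mpr ⟨rfl, rfl⟩).reachable
  | a :: l, hl => (Gqk_adj_vTr_vTr.mpr (Or.inl ⟨a, rfl⟩)).reachable.trans
      (Gqk_reachable_vTr_vT l (Nat.le_of_succ_le hl))

lemma Gqk_reachable_vT : ∀ w : GVert q k, (Gqk q k).Reachable w (vT q k)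
  | Sum.inl (Sum.inl i) => by
    fin_cases i
    · exact SimpleGraph.Adj.reachable (by simp [Gqk, gadjBase, vS, vT])
    · rfl
  | Sum.inl (Sum.inr i) => SimpleGraph.Adj.reachable (by simp [Gqk, gadjBase, vP, vS, vT])
  | Sum.inr u => Gqk_reachable_vTr_vT u.1 u.2

lemma Gqk_connected : (Gqk q k).Connected :=
  SimpleGraph.Connected.mk fun a b => (Gqk_reachable_vT a).trans (Gqk_reachable_vT b).symm

def closedNbhdEnum (v : TreeVert k) (hv : v.1.length < k) :
    Option (Option (Fin 10)) → GVert q k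
  | none => vTr q k v
  | some none => upVert v
  | some (some a) => vTr q k (treeChild v hv a)

lemma range_closedNbhdEnum {v : TreeVert k} (hv : v.1.length < k) :
    Set.range (closedNbhdEnum (q := q) v hv) =
      insert (vTr q k v) ((Gqk q k).neighborSet (vTr q k v)) := by
  ext w
  simp [Gqk_adj_vTr_iff hv, Option.exists, closedNbhdEnum, eq_comm]

lemma closedNbhdEnum_injective {v : TreeVert k} (hv : v.1.length < k) :
    Injective (closedNbhdEnum (q := q) v hv) := by
  have hchild : ∀ a, vTr q k v ≠ vTr q k (treeChild v hv a) := fun a =>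
    vTr_ne_of_length_ne (by simp [treeChild])
  rintro (_ | _ | a) (_ | _ | b) h <;> simp only [closedNbhdEnum] at h
  · rfl
  · exact absurd h (vTr_ne_upVert v)
  · exact absurd h (hchild b)
  · exact absurd h.symm (vTr_ne_upVert v)
  · rfl
  · exact absurd h (upVert_ne_vTr_treeChild hv b)
  · exact absurd h.symm (hchild a)
  · exact absurd h.symm (upVert_ne_vTr_treeChild hv a)
  · rw [vTr_inj, eq_treeChild_iff] at h
    obtain rfl := (List.cons_eq_cons.mp h).1
    rfl

lemma Pdist_Gqk_vTr {v : TreeVert k} (hv : v.1.length < k) :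
    Pdist (Gqk q k) (vTr q k v) = (Set.range (closedNbhdEnum v hv)).indicator fun _ => 12⁻¹ := by
  rw [Pdist_eq_indicator_range (closedNbhdEnum_injective hv) (range_closedNbhdEnum hv)]
  norm_num

lemma degC_Gqk_vTr {v : TreeVert k} (hv : v.1.length < k) :
    degC (Gqk q k) (vTr q k v) = 11 := by
  simpa using degC_add_one_eq_card (closedNbhdEnum_injective (q := q) hv)
    (range_closedNbhdEnum hv)

-- Addresses are reversed root paths, so `L <:+ u.1` says that `u` lies in the subtree at `L`.
def subtreePotential (L : List (Fin 10)) : GVert q k → ℝ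
  | Sum.inl _ => 3
  | Sum.inr u =>
    if L <:+ u.1 ∧ L.length < u.1.length then 0
    else if u.1 = L then 1 else if u.1 = L.tail then 2 else 3

lemma abs_sub_subtreePotential_le_one {L : List (Fin 10)} (hL : L ≠ []) {a b : GVert q k}
    (hab : gadjBase q k a b) : |subtreePotential L a - subtreePotential L b| ≤ 1 := by
  rcases hab with ⟨rfl, rfl⟩ | ⟨i, rfl, rfl | rfl⟩ | ⟨rfl, rfl⟩ | ⟨u, v, rfl, rfl, c, h⟩
  · simp [subtreePotential, vS, vT]
  · simp [subtreePotential, vS, vP]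
  · simp [subtreePotential, vT, vP]
  · simp only [subtreePotential, vT, vTr, treeRoot, List.suffix_nil, hL, false_and, if_false,
      Ne.symm hL]
    split_ifs <;> norm_num
  · simp only [subtreePotential, vTr, h, List.isSuffix_and_length_lt_cons_iff]
    by_cases hv : L <:+ v.1
    · rcases hv.length_le.lt_or_eq with hlt | heq
      · simp [hv, hlt]
      · simp [(hv.eq_of_length heq).symm]
    · have hvL : v.1 ≠ L := fun e => hv (e ▸ List.suffix_refl L)
      simp only [hv, false_and, if_false, hvL]
      split_ifs with h1 h2 <;> norm_num
      exact h2 (by rw [← h1]; rfl)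

lemma subtreePotential_sub_le_gdist {L : List (Fin 10)} (hL : L ≠ []) (u v : GVert q k) :
    subtreePotential L v - subtreePotential L u ≤ gdist (Gqk q k) u v := by
  refine (Gqk_connected u v).sub_le_dist fun a b hab => ?_
  rcases hab.2 with h | h
  · linarith [(abs_le.mp (abs_sub_subtreePotential_le_one hL h)).1]
  · exact (abs_le.mp (abs_sub_subtreePotential_le_one hL h)).2

lemma sum_ite_eq_one_else_three (b : Fin 10) : ∑ a, (if a = b then 1 else 3 : ℝ) = 28 := by
  simp [Finset.sum_ite, Finset.filter_eq', Finset.filter_ne']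
  norm_num

section InternalEdge

variable {x : TreeVert k}

lemma vTr_treeChild_treeParent_head (hx : x.1 ≠ []) (hxk : x.1.length < k) :
    vTr q k (treeChild (treeParent x) (treeParent_length_lt hxk) (x.1.head hx)) = vTr q k x :=
  congrArg _ (Subtype.ext (List.cons_head_tail hx))

lemma subtreePotential_vTr_self : subtreePotential (q := q) x.1 (vTr q k x) = 1 := by
  simp [subtreePotential, vTr]

lemma subtreePotential_vTr_treeChild (hxk : x.1.length < k) (a : Fin 10) :
    subtreePotential (q := q) x.1 (vTr q k (treeChild x hxk a)) = 0 := by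
  simp [subtreePotential, vTr, treeChild, List.suffix_cons]

lemma subtreePotential_vTr_treeParent (hx : x.1 ≠ []) :
    subtreePotential (q := q) x.1 (vTr q k (treeParent x)) = 2 := by
  have := List.length_pos_iff.mpr hx
  have htail : ¬ x.1 <:+ x.1.tail := fun hs => by have := hs.length_le; simp at this; omega
  have hne : x.1.tail ≠ x.1 := fun e => by have := congrArg List.length e; simp at this; omega
  simp [subtreePotential, vTr, treeParent, htail, hne]

lemma subtreePotential_vTr_of_length_lt {u : TreeVert k} (hu : u.1.length < x.1.tail.length) :
    subtreePotential (q := q) x.1 (vTr q k u) = 3 := by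
  simp only [List.length_tail] at hu
  have h1 : ¬ (x.1 <:+ u.1 ∧ x.1.length < u.1.length) := fun h => by omega
  have h2 : u.1 ≠ x.1 := fun e => by rw [e] at hu; omega
  have h3 : u.1 ≠ x.1.tail := fun e => by rw [e, List.length_tail] at hu; omega
  simp [subtreePotential, vTr, h1, h2, h3]

lemma subtreePotential_upVert_treeParent :
    subtreePotential (q := q) x.1 (upVert (treeParent x)) = 3 := by
  unfold upVert
  split_ifs with h
  · rfl
  · apply subtreePotential_vTr_of_length_lt
    have := List.length_pos_iff.mpr h
    simp only [treeParent, List.length_tail] at this ⊢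
    omega

lemma subtreePotential_vTr_treeChild_treeParent (hx : x.1 ≠ [])
    (hy : (treeParent x).1.length < k) (a : Fin 10) :
    subtreePotential (q := q) x.1 (vTr q k (treeChild (treeParent x) hy a)) =
      if a = x.1.head hx then 1 else 3 := by
  have hlen : x.1.length = x.1.tail.length + 1 := by
    have := List.length_pos_iff.mpr hx
    simp only [List.length_tail]
    omega
  have h1 : ¬ (x.1 <:+ a :: x.1.tail ∧ x.1.length < (a :: x.1.tail).length) := fun h => by
    rw [List.length_cons] at h
    omega
  have h2 : a :: x.1.tail = x.1 ↔ a = x.1.head hx := by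
    constructor
    · intro e
      simpa [List.head?_eq_some_head hx] using congrArg List.head? e
    · rintro rfl
      exact List.cons_head_tail hx
  simp only [subtreePotential, vTr, treeChild, treeParent, h1, h2, if_false, List.cons_ne_self]

lemma sum_subtreePotential_closedNbhdEnum (hx : x.1 ≠ []) (hxk : x.1.length < k) :
    ∑ i, subtreePotential (q := q) x.1 (closedNbhdEnum x hxk i) = 3 := by
  simp only [Fintype.sum_option, closedNbhdEnum, subtreePotential_vTr_self,
    upVert_eq_vTr_treeParent hx, subtreePotential_vTr_treeParent hx,
    subtreePotential_vTr_treeChild]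
  norm_num

lemma sum_subtreePotential_closedNbhdEnum_treeParent (hx : x.1 ≠ []) (hxk : x.1.length < k) :
    ∑ i, subtreePotential (q := q) x.1
      (closedNbhdEnum (treeParent x) (treeParent_length_lt hxk) i) = 33 := by
  simp only [Fintype.sum_option, closedNbhdEnum, subtreePotential_vTr_treeParent hx,
    subtreePotential_upVert_treeParent, subtreePotential_vTr_treeChild_treeParent hx]
  rw [sum_ite_eq_one_else_three]
  norm_num

lemma gdist_vTr_treeChild_le (hx : x.1 ≠ []) (hxk : x.1.length < k) (a : Fin 10) :
    gdist (Gqk q k) (vTr q k (treeChild x hxk a))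
        (vTr q k (treeChild (treeParent x) (treeParent_length_lt hxk) a)) ≤
      if a = x.1.head hx then 1 else 3 := by
  have hcx : (Gqk q k).Adj (vTr q k (treeChild x hxk a)) (vTr q k x) :=
    ((Gqk_adj_vTr_iff hxk).mpr (Or.inr ⟨a, rfl⟩)).symm
  split_ifs with ha
  · subst ha
    rw [vTr_treeChild_treeParent_head hx hxk]
    simp [gdist, SimpleGraph.dist_eq_one_iff_adj.mpr hcx]
  · have hxy : (Gqk q k).Adj (vTr q k x) (vTr q k (treeParent x)) :=
      (Gqk_adj_vTr_iff hxk).mpr (Or.inl (upVert_eq_vTr_treeParent hx).symm)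
    have hyc := (Gqk_adj_vTr_iff (q := q) (treeParent_length_lt hxk)).mpr (Or.inr ⟨a, rfl⟩)
    unfold gdist
    exact_mod_cast (SimpleGraph.dist_le (hcx.toWalk.append (hxy.toWalk.append hyc.toWalk))).trans
      (by simp)

lemma sum_gdist_closedNbhdEnum_le (hx : x.1 ≠ []) (hxk : x.1.length < k) :
    ∑ i, gdist (Gqk q k) (closedNbhdEnum x hxk i)
      (closedNbhdEnum (treeParent x) (treeParent_length_lt hxk) i) ≤ 30 := by
  have hadj : ∀ {v : TreeVert k} (hv : v.1.length < k),
      gdist (Gqk q k) (vTr q k v) (upVert v) = 1 := fun hv => by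
    simp [gdist, Gqk_adj_vTr_iff hv]
  have hchildren := Finset.sum_le_sum fun a (_ : a ∈ Finset.univ) =>
    gdist_vTr_treeChild_le (q := q) hx hxk a
  rw [sum_ite_eq_one_else_three] at hchildren
  simp only [Fintype.sum_option, closedNbhdEnum]
  rw [← upVert_eq_vTr_treeParent hx, hadj hxk, upVert_eq_vTr_treeParent hx,
    hadj (treeParent_length_lt hxk)]
  linarith

lemma EMD_Pdist_treeParent (hx : x.1 ≠ []) (hxk : x.1.length < k) :
    EMD (gdist (Gqk q k)) (Pdist (Gqk q k) (vTr q k x))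
      (Pdist (Gqk q k) (vTr q k (treeParent x))) = 5 / 2 := by
  have hy := treeParent_length_lt hxk
  have he := closedNbhdEnum_injective (q := q) hxk
  have he' := closedNbhdEnum_injective (q := q) hy
  rw [Pdist_Gqk_vTr hxk, Pdist_Gqk_vTr hy]
  apply le_antisymm
  · calc _ ≤ 12⁻¹ * ∑ i, gdist (Gqk q k) (closedNbhdEnum x hxk i)
          (closedNbhdEnum (treeParent x) hy i) :=
          EMD_indicator_range_le (fun u v => Nat.cast_nonneg _) he he' (by norm_num)
      _ ≤ 12⁻¹ * 30 := by gcongr; exact sum_gdist_closedNbhdEnum_le hx hxk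
      _ = 5 / 2 := by norm_num
  · calc (5 / 2 : ℝ) = 12⁻¹ * (33 - 3) := by norm_num
      _ = 12⁻¹ * (∑ i, subtreePotential x.1 (closedNbhdEnum (treeParent x) hy i) -
          ∑ i, subtreePotential x.1 (closedNbhdEnum x hxk i)) := by
        rw [sum_subtreePotential_closedNbhdEnum hx hxk,
          sum_subtreePotential_closedNbhdEnum_treeParent hx hxk]
      _ ≤ _ := le_EMD_indicator_range (subtreePotential_sub_le_gdist hx) he he' (by norm_num)

end InternalEdge

lemma Nk_le_fifteen_mul_pow (hk : 1 ≤ k) : Nk k ≤ 15 * 10 ^ (k - 1) := by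
  obtain ⟨j, rfl⟩ := Nat.exists_eq_add_of_le' hk
  apply Nat.div_le_of_le_mul
  simp only [Nat.add_sub_cancel, pow_succ]
  omega

lemma pow_le_card_internal_nonroot (hk : 2 ≤ k) :
    10 ^ (k - 1) ≤ (Finset.univ.filter fun x : TreeVert k => x.1 ≠ [] ∧ x.1.length < k).card := by
  let f : List.Vector (Fin 10) (k - 1) → TreeVert k := fun w => ⟨w.1, by rw [w.2]; omega⟩
  have hmaps : ∀ w ∈ Finset.univ,
      f w ∈ Finset.univ.filter fun x : TreeVert k => x.1 ≠ [] ∧ x.1.length < k := fun w _ =>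
    Finset.mem_filter.mpr ⟨Finset.mem_univ _, List.ne_nil_of_length_pos (by simp [f]; omega),
      by simp [f]; omega⟩
  have := Finset.card_le_card_of_injOn f hmaps fun a _ b _ h =>
    Subtype.ext (congrArg (fun x : TreeVert k => x.1) h)
  simpa using this

theorem internal_edges_curvature_general (q k : ℕ) (hk : 2 ≤ k) :
    (∀ x : TreeVert k, x.1 ≠ [] → x.1.length < k →
      degC (Gqk q k) (vTr q k x) = 11 ∧
      degC (Gqk q k) (vTr q k (treeParent x)) = 11 ∧
      EMD (gdist (Gqk q k)) (Pdist (Gqk q k) (vTr q k x))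
          (Pdist (Gqk q k) (vTr q k (treeParent x))) = 5 / 2 ∧
      ricci (Gqk q k) (vTr q k x) (vTr q k (treeParent x)) = -(3 / 2) ∧
      ricci (Gqk q k) (vTr q k x) (vTr q k (treeParent x)) ≤ -(1 / 4)) ∧
    (∑ x ∈ Finset.univ.filter (fun x : TreeVert k => x.1 ≠ [] ∧ x.1.length < k),
        ricci (Gqk q k) (vTr q k x) (vTr q k (treeParent x))) ≤ (-(Nk k : ℝ) + 1) / 10 := by
  have hricci : ∀ x : TreeVert k, x.1 ≠ [] → x.1.length < k →
      ricci (Gqk q k) (vTr q k x) (vTr q k (treeParent x)) = -(3 / 2) := by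
    intro x hx hxk
    rw [ricci, EMD_Pdist_treeParent hx hxk]
    norm_num
  refine ⟨fun x hx hxk => ⟨degC_Gqk_vTr hxk, degC_Gqk_vTr (treeParent_length_lt hxk),
    EMD_Pdist_treeParent hx hxk, hricci x hx hxk, by rw [hricci x hx hxk]; norm_num⟩, ?_⟩
  rw [Finset.sum_congr rfl fun x hx => hricci x (Finset.mem_filter.mp hx).2.1
    (Finset.mem_filter.mp hx).2.2, Finset.sum_const, nsmul_eq_mul]
  have hcard : (10 : ℝ) ^ (k - 1) ≤
      (Finset.univ.filter fun x : TreeVert k => x.1 ≠ [] ∧ x.1.length < k).card := by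
    exact_mod_cast pow_le_card_internal_nonroot hk
  have hNk : (Nk k : ℝ) ≤ 15 * 10 ^ (k - 1) := by
    exact_mod_cast Nk_le_fifteen_mul_pow (by omega)
  linarith

/-- In the graph `G_{q,k}` with `q ≥ 1` and `k ≥ 2`, every tree edge of
`H₂` joining two non-leaf (internal) vertices `r_i` and `r_j` satisfies
`EMD(P_{r_i}, P_{r_j}) = 5/2`, i.e. `C_{G_{q,k}}({r_i,r_j}) = −3/2` (both endpoints have
degree 11); in particular `C_{G_{q,k}}({r_i,r_j}) ≤ −1/4` for each such edge, and the sum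
`Λ₄` of the curvatures over all internal tree edges satisfies `Λ₄ ≤ (−N_k + 1)/10`. -/
theorem internal_edges_curvature (q k : ℕ) (hq : 1 ≤ q) (hk : 2 ≤ k) :
    (∀ x : TreeVert k, x.1 ≠ [] → x.1.length < k →
      degC (Gqk q k) (vTr q k x) = 11 ∧
      degC (Gqk q k) (vTr q k (treeParent x)) = 11 ∧
      EMD (gdist (Gqk q k)) (Pdist (Gqk q k) (vTr q k x))
          (Pdist (Gqk q k) (vTr q k (treeParent x))) = 5 / 2 ∧
      ricci (Gqk q k) (vTr q k x) (vTr q k (treeParent x)) = -(3 / 2) ∧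
      ricci (Gqk q k) (vTr q k x) (vTr q k (treeParent x)) ≤ -(1 / 4)) ∧
    (∑ x ∈ Finset.univ.filter (fun x : TreeVert k => x.1 ≠ [] ∧ x.1.length < k),
        ricci (Gqk q k) (vTr q k x) (vTr q k (treeParent x))) ≤ (-(Nk k : ℝ) + 1) / 10 :=
  internal_edges_curvature_general q k hk
end
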